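/- arXiv:2501.01181 — 4 statements merged into one kernel-verified Lean document; each statement's English description precedes it below -/
import Mathlib

section
/- Let ξ ∈ ℝ and let Q be a real symmetric traceless 3×3 matrix, regarded as a complex matrix. Then for every complex symmetric traceless 3×3 matrix A and every complex traceless 3×3 matrix B one has ⟨S_ξ(Q)A, B⟩ = ⟨A, S̃_ξ(Q)B⟩, where ⟨M,N⟩ = Σ_{i,j} M_{ij}·conj(N_{ij}) is the Hilbert–Schmidt inner product on ℂ^{3×3}. -/
set_option maxHeartbeats 2000000


open Matrix

/-- `S_ξ(Q)A := [Q,A] − (2ξ/3)A − ξ{Q,A} + 2ξ(Q + I/3)·tr(QA)` on complex 3×3 matrices. -/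
noncomputable def Sxi (ξ : ℝ) (Q A : Matrix (Fin 3) (Fin 3) ℂ) : Matrix (Fin 3) (Fin 3) ℂ :=
  (Q * A - A * Q) - ((2 * (ξ : ℂ)) / 3) • A - (ξ : ℂ) • (Q * A + A * Q)
    + (2 * (ξ : ℂ) * Matrix.trace (Q * A)) • (Q + (3 : ℂ)⁻¹ • (1 : Matrix (Fin 3) (Fin 3) ℂ))

/-- `S̃_ξ(Q)B := [Q,(B−Bᵀ)/2] − (ξ/3)(B+Bᵀ) − ξ{Q,(B+Bᵀ)/2} + ξ(Q + I/3)·tr(Q(B+Bᵀ))`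
(for real `Q` no conjugation is needed). -/
noncomputable def Stxi (ξ : ℝ) (Q B : Matrix (Fin 3) (Fin 3) ℂ) : Matrix (Fin 3) (Fin 3) ℂ :=
  (Q * ((2 : ℂ)⁻¹ • (B - Bᵀ)) - ((2 : ℂ)⁻¹ • (B - Bᵀ)) * Q)
    - ((ξ : ℂ) / 3) • (B + Bᵀ)
    - (ξ : ℂ) • (Q * ((2 : ℂ)⁻¹ • (B + Bᵀ)) + ((2 : ℂ)⁻¹ • (B + Bᵀ)) * Q)
    + ((ξ : ℂ) * Matrix.trace (Q * (B + Bᵀ))) • (Q + (3 : ℂ)⁻¹ • (1 : Matrix (Fin 3) (Fin 3) ℂ))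

/-- For `ξ ∈ ℝ`, a real symmetric traceless `Q` (regarded as complex), a complex symmetric
traceless `A` and a complex traceless `B`, one has
`⟨S_ξ(Q)A, B⟩ = ⟨A, S̃_ξ(Q)B⟩` for the Hilbert–Schmidt inner product
`⟨M,N⟩ = Σ_{i,j} M_{ij}·conj(N_{ij})`. -/
theorem Sxi_inner_eq_inner_Stxi (ξ : ℝ) (Q : Matrix (Fin 3) (Fin 3) ℝ)
    (hQsymm : Qᵀ = Q) (hQtr : Matrix.trace Q = 0)
    (A : Matrix (Fin 3) (Fin 3) ℂ) (hAsymm : Aᵀ = A) (hAtr : Matrix.trace A = 0)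
    (B : Matrix (Fin 3) (Fin 3) ℂ) (hBtr : Matrix.trace B = 0) :
    ∑ i, ∑ j, Sxi ξ (Q.map Complex.ofReal) A i j * starRingEnd ℂ (B i j)
      = ∑ i, ∑ j, A i j * starRingEnd ℂ (Stxi ξ (Q.map Complex.ofReal) B i j) := by
  have hQ10 : Q 1 0 = Q 0 1 := by have h := congrFun (congrFun hQsymm 1) 0; simpa using h.symm
  have hQ20 : Q 2 0 = Q 0 2 := by have h := congrFun (congrFun hQsymm 2) 0; simpa using h.symm
  have hQ21 : Q 2 1 = Q 1 2 := by have h := congrFun (congrFun hQsymm 2) 1; simpa using h.symm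
  have hA10 : A 1 0 = A 0 1 := by have h := congrFun (congrFun hAsymm 1) 0; simpa using h.symm
  have hA20 : A 2 0 = A 0 2 := by have h := congrFun (congrFun hAsymm 2) 0; simpa using h.symm
  have hA21 : A 2 1 = A 1 2 := by have h := congrFun (congrFun hAsymm 2) 1; simpa using h.symm
  have hQ22 : Q 2 2 = -(Q 0 0 + Q 1 1) := by
    have := hQtr; simp [Matrix.trace, Matrix.diag, Fin.sum_univ_three] at this; linarith
  have hA22 : A 2 2 = -(A 0 0 + A 1 1) := by
    have := hAtr; simp [Matrix.trace, Matrix.diag, Fin.sum_univ_three] at this; linear_combination this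
  have hB22 : B 2 2 = -(B 0 0 + B 1 1) := by
    have := hBtr; simp [Matrix.trace, Matrix.diag, Fin.sum_univ_three] at this; linear_combination this
  simp only [Sxi, Stxi, Matrix.mul_apply, Matrix.add_apply, Matrix.sub_apply,
    Matrix.smul_apply, Matrix.one_apply, Matrix.trace, Matrix.diag_apply, Fin.sum_univ_three,
    Matrix.map_apply, Matrix.transpose_apply, smul_eq_mul, hQ10, hQ20, hQ21, hA10, hA20, hA21,
    hQ22, hA22, hB22]
  simp only [map_add, map_sub, _root_.map_mul, map_neg, map_inv₀, map_div₀, Complex.conj_ofReal,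
    map_ofNat, Complex.ofReal_neg, Complex.ofReal_add, Fin.reduceEq, reduceIte,
    one_ne_zero, zero_ne_one]
  norm_num
  ring
end

section
/- Let Q be a real symmetric 3×3 matrix with tr Q = 0 satisfying −Q + Q² − (tr(Q²)/3)·I − tr(Q²)·Q = 0. Then Q = 0. (Hence the zero matrix is the only spatially constant solution of H(Q) = 0 for the Landau–de Gennes variational derivative H(Q) = ΔQ − Q + (Q² − tr(Q²)I/3) − tr(Q²)Q with unit coefficients, and (0,0,0,0) is the only spatially constant equilibrium of the interaction problem.) -/
open Matrix

/-- If `Q` is a real symmetric traceless 3×3 matrix satisfying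
`−Q + Q² − (tr(Q²)/3)·I − tr(Q²)·Q = 0`, then `Q = 0`.
Hence the zero matrix is the only spatially constant solution of `H(Q) = 0` for the
Landau–de Gennes variational derivative with unit coefficients. -/
theorem eq_zero_of_bulk_critical (Q : Matrix (Fin 3) (Fin 3) ℝ)
    (hQsymm : Qᵀ = Q) (hQtr : Matrix.trace Q = 0)
    (hcrit : -Q + Q * Q - (Matrix.trace (Q * Q) / 3) • (1 : Matrix (Fin 3) (Fin 3) ℝ)
      - Matrix.trace (Q * Q) • Q = 0) :
    Q = 0 := by
  have e10 : Q 1 0 = Q 0 1 := by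
    conv_lhs => rw [← hQsymm, Matrix.transpose_apply]
  have e20 : Q 2 0 = Q 0 2 := by
    conv_lhs => rw [← hQsymm, Matrix.transpose_apply]
  have e21 : Q 2 1 = Q 1 2 := by
    conv_lhs => rw [← hQsymm, Matrix.transpose_apply]
  -- write `Q` as an explicit symmetric matrix
  obtain ⟨a, b, c, d, e, f, hQ⟩ :
      ∃ a b c d e f, Q = !![a, b, c; b, d, e; c, e, f] :=
    ⟨Q 0 0, Q 0 1, Q 0 2, Q 1 1, Q 1 2, Q 2 2, by
      conv_lhs => rw [Matrix.eta_fin_three Q]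
      rw [e10, e20, e21]⟩
  subst hQ
  clear hQsymm e10 e20 e21
  set M : Matrix (Fin 3) (Fin 3) ℝ := !![a, b, c; b, d, e; c, e, f] with hM
  have htr : a + d + f = 0 := by
    have h := hQtr
    rw [hM, Matrix.trace_fin_three_of] at h
    linarith
  have hf : f = -a - d := by linarith
  subst hf
  set s : ℝ := Matrix.trace (M * M) with hs_def
  have hs_entries : s = a ^ 2 + d ^ 2 + (-a - d) ^ 2
      + 2 * b ^ 2 + 2 * c ^ 2 + 2 * e ^ 2 := by
    rw [hs_def, hM, Matrix.mul_fin_three, Matrix.trace_fin_three_of]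
    ring
  have hs : 0 ≤ s := by rw [hs_entries]; positivity
  -- From the critical equation: M² = (1+s)•M + (s/3)•1
  have h1 : M * M = (1 + s) • M + (s / 3) • (1 : Matrix (Fin 3) (Fin 3) ℝ) := by
    ext i j
    have h := congrFun (congrFun hcrit i) j
    simp only [Matrix.add_apply, Matrix.sub_apply, Matrix.neg_apply,
      Matrix.smul_apply, Matrix.zero_apply, smul_eq_mul] at h ⊢
    linarith
  -- Cayley–Hamilton for the traceless symmetric matrix `M`
  have h2 : M * M * M = (s / 2) • M + M.det • (1 : Matrix (Fin 3) (Fin 3) ℝ) := by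
    rw [hs_entries, hM, Matrix.mul_fin_three, Matrix.mul_fin_three,
      Matrix.det_fin_three, Matrix.one_fin_three]
    ext i j
    fin_cases i <;> fin_cases j <;>
      simp [Matrix.smul_apply, Matrix.vecHead, Matrix.vecTail] <;> ring
  -- Another expression for M³ coming from h1
  have h3 : M * M * M = ((1 + s) ^ 2 + s / 3) • M
      + ((1 + s) * (s / 3)) • (1 : Matrix (Fin 3) (Fin 3) ℝ) := by
    calc M * M * M = ((1 + s) • M + (s / 3) • (1 : Matrix (Fin 3) (Fin 3) ℝ)) * M := by
          rw [h1]
      _ = (1 + s) • (M * M) + (s / 3) • M := by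
          rw [add_mul, smul_mul_assoc, smul_mul_assoc, one_mul]
      _ = (1 + s) • ((1 + s) • M + (s / 3) • (1 : Matrix (Fin 3) (Fin 3) ℝ)) + (s / 3) • M := by
          rw [h1]
      _ = ((1 + s) ^ 2 + s / 3) • M + ((1 + s) * (s / 3)) • (1 : Matrix (Fin 3) (Fin 3) ℝ) := by
          rw [smul_add, smul_smul, smul_smul]
          module
  have key := h3.symm.trans h2
  -- take the trace to identify `det M`
  have ktr := congrArg Matrix.trace key
  simp only [Matrix.trace_add, Matrix.trace_smul, Matrix.trace_one, hQtr,
    smul_eq_mul, mul_zero, zero_add, Fintype.card_fin] at ktr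
  have hdet : M.det = (1 + s) * (s / 3) := by
    have h := ktr
    push_cast at h
    linarith
  rw [hdet] at key
  have key2 : (((1 + s) ^ 2 + s / 3) - s / 2) • M = 0 := by
    have h4 : ((1 + s) ^ 2 + s / 3) • M = (s / 2) • M := add_right_cancel key
    rw [sub_smul, h4, sub_self]
  have hc : ((1 + s) ^ 2 + s / 3) - s / 2 ≠ 0 := by nlinarith
  rcases smul_eq_zero.mp key2 with h | h
  · exact absurd h hc
  · exact h
end

section
/- Let n be a finite index type, and let A, B : ℝ → ℝ^{n×n} with A differentiable, A'(t) = B(t)·A(t) for all t, tr(B(t)) = 0 for all t, and A(0) = I. Then det A(t) = 1 for all t ∈ ℝ. (Liouville's theorem: the flow of a divergence-free vector field is volume preserving, applied to the Jacobian matrix of the flow.) -/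
open Matrix

attribute [local instance] Matrix.frobeniusNormedAddCommGroup Matrix.frobeniusNormedSpace

lemma det_bound_aux {n : Type*} [Fintype n] [DecidableEq n] (M : n → n → ℝ) :
    ‖Matrix.det (Matrix.of M)‖ ≤ (Nat.factorial (Fintype.card n)) * ∏ i, ‖M i‖ := by
  rw [Matrix.det_apply]
  refine (norm_sum_le _ _).trans ?_
  have key : ∀ σ : Equiv.Perm n, ‖Equiv.Perm.sign σ • ∏ i, Matrix.of M (σ i) i‖ ≤ ∏ i, ‖M i‖ := by
    intro σ
    have h1 : ‖Equiv.Perm.sign σ • ∏ i, Matrix.of M (σ i) i‖ = ‖∏ i, M (σ i) i‖ := by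
      rcases Int.units_eq_one_or (Equiv.Perm.sign σ) with h | h <;>
        simp [h, Units.smul_def, norm_neg]
    rw [h1]
    have h2 : ‖∏ i, M (σ i) i‖ ≤ ∏ i, ‖M (σ i)‖ := by
      rw [norm_prod]
      exact Finset.prod_le_prod (fun i _ => norm_nonneg _)
        (fun i _ => norm_le_pi_norm (M (σ i)) i)
    refine h2.trans ?_
    rw [Equiv.prod_comp σ (fun i => ‖M i‖)]
  calc ∑ σ : Equiv.Perm n, ‖Equiv.Perm.sign σ • ∏ i, Matrix.of M (σ i) i‖
      ≤ ∑ _σ : Equiv.Perm n, ∏ i, ‖M i‖ := Finset.sum_le_sum (fun σ _ => key σ)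
    _ = (Nat.factorial (Fintype.card n)) * ∏ i, ‖M i‖ := by
        rw [Finset.sum_const, Finset.card_univ, Fintype.card_perm, nsmul_eq_mul]

/-- The determinant as a continuous multilinear map in the rows. -/
noncomputable def detCMM (n : Type*) [Fintype n] [DecidableEq n] :
    ContinuousMultilinearMap ℝ (fun _ : n => (n → ℝ)) ℝ :=
  MultilinearMap.mkContinuous
    (Matrix.detRowAlternating : (n → ℝ) [⋀^n]→ₗ[ℝ] ℝ).toMultilinearMap
    (Nat.factorial (Fintype.card n)) (fun m => det_bound_aux m)

lemma detCMM_apply {n : Type*} [Fintype n] [DecidableEq n] (M : Matrix n n ℝ) :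
    detCMM n (fun i => M i) = M.det := rfl

/-- Liouville's theorem: if `A' (t) = B(t)·A(t)` with `tr B(t) = 0` for all `t` and
`A(0) = I`, then `det A(t) = 1` for all `t`. -/
theorem det_eq_one_of_traceless_ode {n : Type*} [Fintype n] [DecidableEq n]
    (A B : ℝ → Matrix n n ℝ)
    (hODE : ∀ t, HasDerivAt A (B t * A t) t)
    (htr : ∀ t, Matrix.trace (B t) = 0)
    (h0 : A 0 = 1) :
    ∀ t : ℝ, (A t).det = 1 := by
  -- the projection of matrices to their families of rows, as a continuous linear map
  let e : Matrix n n ℝ →ₗ[ℝ] (n → n → ℝ) :=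
    { toFun := fun M i => M i
      map_add' := fun _ _ => rfl
      map_smul' := fun _ _ => rfl }
  let L : Matrix n n ℝ →L[ℝ] (n → n → ℝ) := e.toContinuousLinearMap
  -- `t ↦ det (A t)` has derivative `tr (B t) * det (A t) = 0` everywhere
  have hderiv : ∀ t : ℝ, HasDerivAt (fun t => (A t).det) 0 t := by
    intro t
    have hrows : HasDerivAt (fun t => L (A t)) (L (B t * A t)) t :=
      L.hasFDerivAt.comp_hasDerivAt t (hODE t)
    have hf : HasDerivAt (fun t => detCMM n (L (A t)))
        ((detCMM n).linearDeriv (L (A t)) (L (B t * A t))) t :=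
      ((detCMM n).hasFDerivAt (L (A t))).comp_hasDerivAt t hrows
    have hL : ∀ M : Matrix n n ℝ, L M = fun i => M i := fun _ => rfl
    have hval : (detCMM n).linearDeriv (L (A t)) (L (B t * A t)) = 0 := by
      rw [ContinuousMultilinearMap.linearDeriv_apply]
      have hterm : ∀ i : n,
          detCMM n (Function.update (L (A t)) i (L (B t * A t) i))
            = B t i i * (A t).det := by
        intro i
        have hupd : Function.update (L (A t)) i (L (B t * A t) i)
            = fun j => ((A t).updateRow i (∑ k, B t i k • A t k)) j := by
          funext j
          by_cases hji : j = i
          · subst hji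
            simp only [hL, Function.update_self, Matrix.updateRow_self]
            funext l
            simp [Matrix.mul_apply, Finset.sum_apply]
          · simp [hL, Function.update_of_ne hji, Matrix.updateRow_ne hji]
        rw [hupd, detCMM_apply, Matrix.det_updateRow_sum]
        simp [smul_eq_mul]
      rw [Finset.sum_congr rfl (fun i _ => hterm i), ← Finset.sum_mul]
      have : ∑ i, B t i i = Matrix.trace (B t) := rfl
      rw [this, htr t, zero_mul]
    have : (fun t => detCMM n (L (A t))) = fun t => (A t).det := by
      funext s
      rw [hL, detCMM_apply]
    rw [this, hval] at hf
    exact hf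
  intro t
  have hconst : (A t).det = (A 0).det :=
    is_const_of_deriv_eq_zero (fun s => (hderiv s).differentiableAt)
      (fun s => (hderiv s).deriv) t 0
  rw [hconst, h0, Matrix.det_one]
end

section
/- Let Ω : ℝ → ℝ³ be differentiable, let m(t) be the skew-symmetric 3×3 matrix with m(t)·y = Ω(t) × y for all y, and let O : ℝ → ℝ^{3×3} be differentiable with O'(t) = m(t)·O(t) and O(t)ᵀO(t) = I, det O(t) = 1 for all t. Let J₀ be a constant real 3×3 matrix, set J(t) := O(t)·J₀·O(t)ᵀ and ω(t) := O(t)ᵀ·Ω(t). Then ω is differentiable and the map t ↦ J(t)·Ω(t) is differentiable with (J Ω)'(t) = O(t)·( J₀·ω'(t) + ω(t) × (J₀·ω(t)) ) for every t. (This identity transforms Euler's equation (JΩ)' = T for the rigid body into an equation for ω in the reference frame.) -/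
/-! Writing `J Ω = O (J₀ ω)`, the product rule gives `(J Ω)' = O' J₀ ω + O J₀ ω'`. Since
`O' = m O`, the first term is `Ω × (O J₀ ω) = (O ω) × (O J₀ ω) = O (ω × J₀ ω)`, because
rotations preserve the cross product. And `ω' = Oᵀ Ω'`: the other term `(m O)ᵀ Ω = Oᵀ (mᵀ Ω)`
vanishes because `mᵀ Ω ⬝ y = Ω ⬝ (Ω × y) = 0`. -/

open Matrix

attribute [local instance] Matrix.frobeniusNormedAddCommGroup Matrix.frobeniusNormedSpace

section MatrixCalculus

variable {𝕜 ι κ : Type*} [NontriviallyNormedField 𝕜] [CompleteSpace 𝕜] [Fintype ι] [Fintype κ]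
  {A : 𝕜 → Matrix ι κ 𝕜} {A' : Matrix ι κ 𝕜} {t : 𝕜}

theorem HasDerivAt.matrix_mulVec {v : 𝕜 → κ → 𝕜} {v' : κ → 𝕜}
    (hA : HasDerivAt A A' t) (hv : HasDerivAt v v' t) :
    HasDerivAt (fun s => A s *ᵥ v s) (A t *ᵥ v' + A' *ᵥ v t) t := by
  let B : Matrix ι κ 𝕜 →L[𝕜] (κ → 𝕜) →L[𝕜] ι → 𝕜 := (mulVecBilin 𝕜 𝕜).toContinuousBilinearMap
  exact B.hasDerivAt_of_bilinear (fun _ => hA) (fun _ => hv)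

theorem HasDerivAt.matrix_vecMul {v : 𝕜 → ι → 𝕜} {v' : ι → 𝕜}
    (hv : HasDerivAt v v' t) (hA : HasDerivAt A A' t) :
    HasDerivAt (fun s => v s ᵥ* A s) (v t ᵥ* A' + v' ᵥ* A t) t := by
  let B : (ι → 𝕜) →L[𝕜] Matrix ι κ 𝕜 →L[𝕜] κ → 𝕜 := (vecMulBilin 𝕜 𝕜).toContinuousBilinearMap
  exact B.hasDerivAt_of_bilinear (fun _ => hv) (fun _ => hA)

end MatrixCalculus

section CrossProduct

variable {R : Type*} [CommRing R]

theorem transpose_mulVec_cross_mulVec (M : Matrix (Fin 3) (Fin 3) R) (a b : Fin 3 → R) :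
    Mᵀ *ᵥ ((M *ᵥ a) ⨯₃ (M *ᵥ b)) = M.det • (a ⨯₃ b) := by
  ext i
  fin_cases i <;>
    simp [mulVec, dotProduct, cross_apply, Fin.sum_univ_three, det_fin_three] <;> ring

theorem mulVec_cross_mulVec_of_orthogonal {M : Matrix (Fin 3) (Fin 3) R} (hM : Mᵀ * M = 1)
    (hdet : M.det = 1) (a b : Fin 3 → R) : (M *ᵥ a) ⨯₃ (M *ᵥ b) = M *ᵥ (a ⨯₃ b) := by
  calc (M *ᵥ a) ⨯₃ (M *ᵥ b) = (M * Mᵀ) *ᵥ ((M *ᵥ a) ⨯₃ (M *ᵥ b)) := by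
        rw [mul_eq_one_comm.mp hM, one_mulVec]
    _ = M *ᵥ (a ⨯₃ b) := by
        rw [← mulVec_mulVec, transpose_mulVec_cross_mulVec, hdet, one_smul]

theorem vecMul_eq_zero_of_mulVec_eq_cross {m : Matrix (Fin 3) (Fin 3) R} {w : Fin 3 → R}
    (hm : ∀ y, m *ᵥ y = w ⨯₃ y) : w ᵥ* m = 0 := by
  ext j
  have h := dot_self_cross w (Pi.single j 1)
  rwa [← hm, dotProduct_mulVec, dotProduct_single_one] at h

end CrossProduct

theorem hasDerivAt_transpose_mulVec_of_hasDerivAt_eq_cross_mul {Ω : ℝ → Fin 3 → ℝ}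
    {O : ℝ → Matrix (Fin 3) (Fin 3) ℝ} {m : Matrix (Fin 3) (Fin 3) ℝ} {Ω' : Fin 3 → ℝ} {t : ℝ}
    (hΩ : HasDerivAt Ω Ω' t) (hm : ∀ y, m *ᵥ y = Ω t ⨯₃ y) (hO : HasDerivAt O (m * O t) t) :
    HasDerivAt (fun s => (O s)ᵀ *ᵥ Ω s) ((O t)ᵀ *ᵥ Ω') t := by
  simp_rw [mulVec_transpose]
  convert hΩ.matrix_vecMul hO using 1
  rw [← vecMul_vecMul, vecMul_eq_zero_of_mulVec_eq_cross hm, zero_vecMul, zero_add]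

/-- Let `Ω` be differentiable, `m(t)` the skew-symmetric matrix with `m(t)·y = Ω(t) × y`,
and `O` a solution of `O' = m·O` with `O(t) ∈ SO(3)`. With `J(t) := O(t)·J₀·O(t)ᵀ` and
`ω := Oᵀ·Ω`, the map `ω` is differentiable and `t ↦ J(t)·Ω(t)` is differentiable with
`(JΩ)'(t) = O(t)·(J₀·ω'(t) + ω(t) × (J₀·ω(t)))`. -/
theorem transformed_euler_identity (Ω Ω' : ℝ → Fin 3 → ℝ)
    (hΩ : ∀ t, HasDerivAt Ω (Ω' t) t)
    (m : ℝ → Matrix (Fin 3) (Fin 3) ℝ)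
    (hm : ∀ t y, (m t).mulVec y = crossProduct (Ω t) y)
    (O : ℝ → Matrix (Fin 3) (Fin 3) ℝ)
    (hO : ∀ t, HasDerivAt O (m t * O t) t)
    (horth : ∀ t, (O t)ᵀ * O t = 1) (hdet : ∀ t, (O t).det = 1)
    (J₀ : Matrix (Fin 3) (Fin 3) ℝ) :
    ∃ ω' : ℝ → Fin 3 → ℝ,
      (∀ t, HasDerivAt (fun s => (O s)ᵀ.mulVec (Ω s)) (ω' t) t) ∧
      ∀ t, HasDerivAt (fun s => (O s * J₀ * (O s)ᵀ).mulVec (Ω s))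
        ((O t).mulVec (J₀.mulVec (ω' t)
          + crossProduct ((O t)ᵀ.mulVec (Ω t)) (J₀.mulVec ((O t)ᵀ.mulVec (Ω t))))) t := by
  set ω := fun s => (O s)ᵀ *ᵥ Ω s
  have hω : ∀ t, HasDerivAt ω ((O t)ᵀ *ᵥ Ω' t) t := fun t =>
    hasDerivAt_transpose_mulVec_of_hasDerivAt_eq_cross_mul (hΩ t) (hm t) (hO t)
  refine ⟨fun t => (O t)ᵀ *ᵥ Ω' t, hω, fun t => ?_⟩
  have hJΩ : (fun s => (O s * J₀ * (O s)ᵀ) *ᵥ Ω s) = fun s => O s *ᵥ (J₀ *ᵥ ω s) := by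
    ext1 s
    simp only [ω, mulVec_mulVec, Matrix.mul_assoc]
  have hOω : O t *ᵥ ω t = Ω t := by
    rw [mulVec_mulVec, mul_eq_one_comm.mp (horth t), one_mulVec]
  have hrot : (m t * O t) *ᵥ (J₀ *ᵥ ω t) = O t *ᵥ (ω t ⨯₃ (J₀ *ᵥ ω t)) := by
    rw [← mulVec_mulVec, hm, ← hOω, mulVec_cross_mulVec_of_orthogonal (horth t) (hdet t)]
  rw [hJΩ, mulVec_add, ← hrot]
  have hJω : HasDerivAt (fun s => J₀ *ᵥ ω s) (J₀ *ᵥ ((O t)ᵀ *ᵥ Ω' t)) t := by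
    simpa only [zero_mulVec, add_zero] using (hasDerivAt_const t J₀).matrix_mulVec (hω t)
  exact (hO t).matrix_mulVec hJω
end
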